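/- arXiv:1909.12644 — 7 statements merged into one kernel-verified Lean document; each statement's English description precedes it below -/
import Mathlib

section
/- Let points be represented by dual coordinates (θ, η, ψ, φ) ∈ ℝ^d × ℝ^d × ℝ × ℝ and define γ(p,q,r) := D(r,q) + D(p,r) − D(p,q) where D(p,q) = ψ_q + φ_p − ⟨η_p, θ_q⟩. Suppose the points q̂, q* and p_k each satisfy the Legendre relation ψ + φ = ⟨θ, η⟩, and suppose the Pythagorean relations γ(q̂, q, q*) = 0 and γ(p_k, q, q*) = 0 hold. Then γ_k := γ(p_k, q, q̂) = ⟨θ_{q̂} − θ_{q*}, η_{q̂} − η_{p_k}⟩; in particular γ_k does not depend on the coordinates of q. -/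
/-- A point of a dually flat statistical manifold, represented in coordinates by
dual coordinates `θ, η : Fin d → ℝ` together with potential values `ψ, φ : ℝ`. -/
structure DualPoint (d : ℕ) where
  θ : Fin d → ℝ
  η : Fin d → ℝ
  ψ : ℝ
  φ : ℝ

/-- The canonical divergence `D(p,q) = ψ_q + φ_p − ⟨η_p, θ_q⟩`. -/
def canonDiv {d : ℕ} (p q : DualPoint d) : ℝ :=
  q.ψ + p.φ - ∑ i, p.η i * q.θ i

/-- The deviation from the generalized Pythagorean relation,
`γ(p,q,r) = D(r,q) + D(p,r) − D(p,q)`. -/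
def gammaDev {d : ℕ} (p q r : DualPoint d) : ℝ :=
  canonDiv r q + canonDiv p r - canonDiv p q

lemma sum_expand {d : ℕ} (a b c e : Fin d → ℝ) :
    ∑ i, (a i - b i) * (c i - e i)
      = (∑ i, a i * c i) - (∑ i, a i * e i) - (∑ i, b i * c i) + ∑ i, b i * e i := by
  simp only [sub_mul, mul_sub, Finset.sum_sub_distrib]
  ring

lemma mulcomm_sum {d : ℕ} (a b : Fin d → ℝ) :
    ∑ i, a i * b i = ∑ i, b i * a i :=
  Finset.sum_congr rfl fun i _ => mul_comm _ _

/-- If `q̂`, `q*` and `p_k` satisfy the Legendre relation and the Pythagorean relations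
`γ(q̂, q, q*) = 0` and `γ(p_k, q, q*) = 0` hold, then
`γ_k = γ(p_k, q, q̂) = ⟨θ_{q̂} − θ_{q*}, η_{q̂} − η_{p_k}⟩`;
in particular `γ_k` does not depend on the coordinates of `q`. -/
theorem stmt1 {d : ℕ} (qhat qstar pk q : DualPoint d)
    (hqhat : qhat.ψ + qhat.φ = ∑ i, qhat.θ i * qhat.η i)
    (hqstar : qstar.ψ + qstar.φ = ∑ i, qstar.θ i * qstar.η i)
    (hpk : pk.ψ + pk.φ = ∑ i, pk.θ i * pk.η i)
    (hpy1 : gammaDev qhat q qstar = 0)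
    (hpy2 : gammaDev pk q qstar = 0) :
    gammaDev pk q qhat = ∑ i, (qhat.θ i - qstar.θ i) * (qhat.η i - pk.η i) := by
  simp only [gammaDev, canonDiv] at *
  rw [sum_expand] at *
  rw [mulcomm_sum qhat.θ qhat.η] at hqhat
  rw [mulcomm_sum qstar.θ qstar.η] at hqstar
  rw [mulcomm_sum qhat.θ pk.η, mulcomm_sum qhat.θ qhat.η,
      mulcomm_sum qstar.θ pk.η, mulcomm_sum qstar.θ qhat.η]
  linarith
end

section
/- Let g > 0, w* ∈ (0,1), c ∈ ℝ, f : ℝ → ℝ differentiable at 0 with f(0) = 1, f(x) > 0 for all x, and f'(0) = c, and u : ℝ → ℝ differentiable at w* with u'(w*) = g. Define γ₁(w) = (w − 1)(u(w) − u(w*)), γ₂(w) = w(u(w) − u(w*)), and the normalized update map T(w) = w f(γ₁(w)) / (w f(γ₁(w)) + (1 − w) f(γ₂(w))). Then T(w*) = w*, T is differentiable at w*, and T'(w*) = 1 − c w*(1 − w*) g. -/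
/-!
Both deviations `γᵢ` vanish at `w*`, so each multiplicative factor `f ∘ γᵢ` equals `1` there and
`T(w*) = w*`. For a normalized update `w φ₁(w) / (w φ₁(w) + (1 - w) φ₂(w))` with `φ₁ = φ₂ = 1` at
`w*`, the quotient rule gives the derivative `1 + w*(1 - w*)(φ₁' - φ₂')`, and the chain rule gives
`φ₁' - φ₂' = c ((w* - 1) g - w* g) = -c g`.
-/

noncomputable def twoPointUpdate (φ₁ φ₂ : ℝ → ℝ) (w : ℝ) : ℝ :=
  w * φ₁ w / (w * φ₁ w + (1 - w) * φ₂ w)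

section

variable {φ₁ φ₂ : ℝ → ℝ} {a : ℝ}

theorem twoPointUpdate_apply_of_eq_one (h₁ : φ₁ a = 1) (h₂ : φ₂ a = 1) :
    twoPointUpdate φ₁ φ₂ a = a := by
  simp [twoPointUpdate, h₁, h₂]

theorem hasDerivAt_twoPointUpdate {d₁ d₂ : ℝ} (hφ₁ : HasDerivAt φ₁ d₁ a)
    (hφ₂ : HasDerivAt φ₂ d₂ a) (h₁ : φ₁ a = 1) (h₂ : φ₂ a = 1) :
    HasDerivAt (twoPointUpdate φ₁ φ₂) (1 + a * (1 - a) * (d₁ - d₂)) a := by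
  have hnum := (hasDerivAt_id' a).mul hφ₁
  have hden := hnum.add ((hasDerivAt_id' a).const_sub 1 |>.mul hφ₂)
  have hden_ne : a * φ₁ a + (1 - a) * φ₂ a ≠ 0 := by simp [h₁, h₂]
  refine (hnum.div hden hden_ne).congr_deriv ?_
  simp only [Pi.mul_apply, Pi.add_apply, h₁, h₂]
  ring

end

theorem HasDerivAt.mul_sub_apply_self {p u : ℝ → ℝ} {p' g a : ℝ} (hp : HasDerivAt p p' a)
    (hu : HasDerivAt u g a) : HasDerivAt (fun w => p w * (u w - u a)) (p a * g) a := by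
  refine (hp.mul (hu.sub_const (u a))).congr_deriv ?_
  simp

theorem stmt6_general (g wstar c : ℝ)
    (f : ℝ → ℝ) (hf0 : f 0 = 1) (hf : HasDerivAt f c 0)
    (u : ℝ → ℝ) (hu : HasDerivAt u g wstar)
    (γ₁ γ₂ T : ℝ → ℝ)
    (hγ₁ : γ₁ = fun w => (w - 1) * (u w - u wstar))
    (hγ₂ : γ₂ = fun w => w * (u w - u wstar))
    (hT : T = fun w => w * f (γ₁ w) / (w * f (γ₁ w) + (1 - w) * f (γ₂ w))) :
    T wstar = wstar ∧
    HasDerivAt T (1 - c * wstar * (1 - wstar) * g) wstar := by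
  have hT' : T = twoPointUpdate (f ∘ γ₁) (f ∘ γ₂) := hT
  have hγ₁0 : γ₁ wstar = 0 := by simp [hγ₁]
  have hγ₂0 : γ₂ wstar = 0 := by simp [hγ₂]
  have hφ₁ : HasDerivAt (f ∘ γ₁) (c * ((wstar - 1) * g)) wstar :=
    hf.comp_of_eq wstar
      (hγ₁ ▸ ((hasDerivAt_id' wstar).sub_const 1).mul_sub_apply_self hu) hγ₁0.symm
  have hφ₂ : HasDerivAt (f ∘ γ₂) (c * (wstar * g)) wstar :=
    hf.comp_of_eq wstar (hγ₂ ▸ (hasDerivAt_id' wstar).mul_sub_apply_self hu) hγ₂0.symm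
  have hφ₁1 : (f ∘ γ₁) wstar = 1 := by simp [hγ₁0, hf0]
  have hφ₂1 : (f ∘ γ₂) wstar = 1 := by simp [hγ₂0, hf0]
  refine ⟨hT' ▸ twoPointUpdate_apply_of_eq_one hφ₁1 hφ₂1, ?_⟩
  rw [hT']
  convert hasDerivAt_twoPointUpdate hφ₁ hφ₂ hφ₁1 hφ₂1 using 1
  ring

/-- The normalized one-step update map
`T(w) = w f(γ₁(w)) / (w f(γ₁(w)) + (1 − w) f(γ₂(w)))`
of the `K = 2` geometrical projection algorithm fixes the optimal weight `w*`
and is differentiable there with derivative `1 − c w*(1 − w*) g`. -/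
theorem stmt6 (g wstar c : ℝ) (hg : 0 < g) (hw : wstar ∈ Set.Ioo (0 : ℝ) 1)
    (f : ℝ → ℝ) (hf0 : f 0 = 1) (hfpos : ∀ x, 0 < f x) (hf : HasDerivAt f c 0)
    (u : ℝ → ℝ) (hu : HasDerivAt u g wstar)
    (γ₁ γ₂ T : ℝ → ℝ)
    (hγ₁ : γ₁ = fun w => (w - 1) * (u w - u wstar))
    (hγ₂ : γ₂ = fun w => w * (u w - u wstar))
    (hT : T = fun w => w * f (γ₁ w) / (w * f (γ₁ w) + (1 - w) * f (γ₂ w))) :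
    T wstar = wstar ∧
    HasDerivAt T (1 - c * wstar * (1 - wstar) * g) wstar :=
  stmt6_general g wstar c f hf0 hf u hu γ₁ γ₂ T hγ₁ hγ₂ hT
end

section
/- (Local stability of the algorithm for K = 2.) Let g > 0, w* ∈ (0,1), and let f : ℝ → ℝ be differentiable at 0 with f(0) = 1, f(x) > 0 for all x, and 0 < f'(0) < 2 / (w*(1 − w*) g). Let u : ℝ → ℝ be differentiable at w* with u'(w*) = g, set γ₁(w) = (w − 1)(u(w) − u(w*)), γ₂(w) = w(u(w) − u(w*)), and T(w) = w f(γ₁(w)) / (w f(γ₁(w)) + (1 − w) f(γ₂(w))). Then |T'(w*)| < 1; consequently there exists δ > 0 such that for all w with 0 < |w − w*| < δ, |T(w) − w*| < |w − w*|, i.e. w* is a locally attracting fixed point of the update map. -/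
/-!
Both Pythagorean deviations vanish at `w*`, so `f(γᵢ(w*)) = 1` and `w*` is a fixed point of `T`.
The quotient and chain rules give `T'(w*) = 1 - w*(1 - w*) g f'(0)`, which lies in `(-1, 1)`
exactly when `0 < f'(0) < 2 / (w*(1 - w*) g)`. Near a fixed point the slopes of `T` tend to
`T'(w*)`, so `T w - w* = slope T w* w • (w - w*)` is strictly shorter than `w - w*`.
-/

open Filter Topology

theorem HasDerivAt.exists_norm_sub_lt_of_norm_lt_one {𝕜 : Type*} [NontriviallyNormedField 𝕜]
    {T : 𝕜 → 𝕜} {L x : 𝕜} (hT : HasDerivAt T L x) (hfix : T x = x) (hL : ‖L‖ < 1) :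
    ∃ δ > 0, ∀ w : 𝕜, 0 < ‖w - x‖ → ‖w - x‖ < δ → ‖T w - x‖ < ‖w - x‖ := by
  have hslope : ∀ᶠ w in 𝓝[≠] x, ‖slope T x w‖ < 1 :=
    hT.tendsto_slope.norm.eventually_lt_const hL
  obtain ⟨δ, hδ, hδslope⟩ := Metric.mem_nhdsWithin_iff.mp hslope
  refine ⟨δ, hδ, fun w hw hwδ => ?_⟩
  have hwx : w ≠ x := sub_ne_zero.mp (norm_pos_iff.mp hw)
  have hsl : ‖slope T x w‖ < 1 := hδslope ⟨by rwa [Metric.mem_ball, dist_eq_norm], hwx⟩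
  calc ‖T w - x‖ = ‖slope T x w‖ * ‖w - x‖ := by
        rw [← norm_mul, mul_comm, ← smul_eq_mul, sub_smul_slope, vsub_eq_sub, hfix]
    _ < ‖w - x‖ := mul_lt_of_lt_one_left hw hsl

theorem HasDerivAt.comp_mul_sub_self {f h u : ℝ → ℝ} {a h' g x : ℝ} (hf : HasDerivAt f a 0)
    (hh : HasDerivAt h h' x) (hu : HasDerivAt u g x) :
    HasDerivAt (fun w => f (h w * (u w - u x))) (a * (h x * g)) x := by
  have hf' : HasDerivAt f a (h x * (u x - u x)) := by simpa using hf
  exact (hf'.comp x (hh.fun_mul (hu.sub_const (u x)))).congr_deriv (by simp)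

theorem hasDerivAt_multiplicativeUpdate {F₁ F₂ : ℝ → ℝ} {d₁ d₂ x : ℝ}
    (hF₁ : HasDerivAt F₁ d₁ x) (hF₂ : HasDerivAt F₂ d₂ x) (h₁ : F₁ x = 1) (h₂ : F₂ x = 1) :
    HasDerivAt (fun w => w * F₁ w / (w * F₁ w + (1 - w) * F₂ w))
      (1 + x * (1 - x) * (d₁ - d₂)) x := by
  have hN := (hasDerivAt_id' x).fun_mul hF₁
  have hD := hN.fun_add (((hasDerivAt_const x 1).fun_sub (hasDerivAt_id' x)).fun_mul hF₂)
  refine (hN.fun_div hD (by simp [h₁, h₂])).congr_deriv ?_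
  simp only [h₁, h₂]
  ring

theorem stmt7_general (g wstar : ℝ) (hg : 0 < g) (hw : wstar ∈ Set.Ioo (0 : ℝ) 1)
    (f : ℝ → ℝ) (hf0 : f 0 = 1)
    (hf : HasDerivAt f (deriv f 0) 0)
    (hf'pos : 0 < deriv f 0)
    (hf'lt : deriv f 0 < 2 / (wstar * (1 - wstar) * g))
    (u : ℝ → ℝ) (hu : HasDerivAt u g wstar)
    (γ₁ γ₂ T : ℝ → ℝ)
    (hγ₁ : γ₁ = fun w => (w - 1) * (u w - u wstar))
    (hγ₂ : γ₂ = fun w => w * (u w - u wstar))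
    (hT : T = fun w => w * f (γ₁ w) / (w * f (γ₁ w) + (1 - w) * f (γ₂ w))) :
    |deriv T wstar| < 1 ∧
    ∃ δ > 0, ∀ w : ℝ, 0 < |w - wstar| → |w - wstar| < δ →
      |T w - wstar| < |w - wstar| := by
  obtain ⟨hw0, hw1⟩ := hw
  subst hγ₁ hγ₂ hT
  set c := wstar * (1 - wstar) * g * deriv f 0
  have hT' : HasDerivAt _ (1 - c) wstar :=
    (hasDerivAt_multiplicativeUpdate
      (hf.comp_mul_sub_self ((hasDerivAt_id' wstar).sub_const 1) hu)
      (hf.comp_mul_sub_self (hasDerivAt_id' wstar) hu)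
      (by simp [hf0]) (by simp [hf0])).congr_deriv (by ring)
  have hP : 0 < wstar * (1 - wstar) * g := mul_pos (mul_pos hw0 (sub_pos.mpr hw1)) hg
  have hc_pos : 0 < c := mul_pos hP hf'pos
  have hc_lt : c < 2 := by rwa [lt_div_iff₀ hP, mul_comm] at hf'lt
  have hL : |1 - c| < 1 := abs_sub_lt_iff.mpr ⟨by linarith, by linarith⟩
  refine ⟨hT'.deriv ▸ hL, ?_⟩
  simpa only [Real.norm_eq_abs] using
    hT'.exists_norm_sub_lt_of_norm_lt_one (by field_simp; simp [hf0]) hL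

/-- Local stability of the `K = 2` geometrical projection algorithm: if
`0 < f'(0) < 2 / (w*(1 − w*) g)`, then the one-step update map `T` satisfies
`|T'(w*)| < 1`, and consequently `w*` is a locally attracting fixed point:
there is `δ > 0` such that `|T(w) − w*| < |w − w*|` whenever `0 < |w − w*| < δ`. -/
theorem stmt7 (g wstar : ℝ) (hg : 0 < g) (hw : wstar ∈ Set.Ioo (0 : ℝ) 1)
    (f : ℝ → ℝ) (hf0 : f 0 = 1) (hfpos : ∀ x, 0 < f x)
    (hf : HasDerivAt f (deriv f 0) 0)
    (hf'pos : 0 < deriv f 0)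
    (hf'lt : deriv f 0 < 2 / (wstar * (1 - wstar) * g))
    (u : ℝ → ℝ) (hu : HasDerivAt u g wstar)
    (γ₁ γ₂ T : ℝ → ℝ)
    (hγ₁ : γ₁ = fun w => (w - 1) * (u w - u wstar))
    (hγ₂ : γ₂ = fun w => w * (u w - u wstar))
    (hT : T = fun w => w * f (γ₁ w) / (w * f (γ₁ w) + (1 - w) * f (γ₂ w))) :
    |deriv T wstar| < 1 ∧
    ∃ δ > 0, ∀ w : ℝ, 0 < |w - wstar| → |w - wstar| < δ →
      |T w - wstar| < |w - wstar| :=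
  stmt7_general g wstar hg hw f hf0 hf hf'pos hf'lt u hu γ₁ γ₂ T hγ₁ hγ₂ hT
end

section
/- Let a, b > 0. For every w ∈ [0,1], w(1 − w)(a − b)² ≤ (√a − √b)² (w a + (1 − w) b), i.e. w(1−w)(a−b)²/(w a + (1−w) b) ≤ (√a − √b)²; moreover equality holds at w = √b / (√a + √b). -/
/-- For `a, b > 0` and `w ∈ [0,1]`,
`w(1 − w)(a − b)² ≤ (√a − √b)² (w a + (1 − w) b)`, equivalently
`w(1−w)(a−b)²/(w a + (1−w) b) ≤ (√a − √b)²`; moreover, equality holds at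
`w = √b / (√a + √b)`. -/
theorem stmt8 (a b : ℝ) (ha : 0 < a) (hb : 0 < b) :
    (∀ w ∈ Set.Icc (0 : ℝ) 1,
      w * (1 - w) * (a - b) ^ 2
        ≤ (Real.sqrt a - Real.sqrt b) ^ 2 * (w * a + (1 - w) * b) ∧
      w * (1 - w) * (a - b) ^ 2 / (w * a + (1 - w) * b)
        ≤ (Real.sqrt a - Real.sqrt b) ^ 2) ∧
    (let w₀ : ℝ := Real.sqrt b / (Real.sqrt a + Real.sqrt b);
      w₀ * (1 - w₀) * (a - b) ^ 2
        = (Real.sqrt a - Real.sqrt b) ^ 2 * (w₀ * a + (1 - w₀) * b)) := by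
  set s := Real.sqrt a with hsd
  set t := Real.sqrt b with htd
  have hs : s ^ 2 = a := Real.sq_sqrt ha.le
  have ht : t ^ 2 = b := Real.sq_sqrt hb.le
  have hs0 : 0 < s := Real.sqrt_pos.mpr ha
  have ht0 : 0 < t := Real.sqrt_pos.mpr hb
  have hst : 0 < s + t := by linarith
  constructor
  · intro w hw
    obtain ⟨hw0, hw1⟩ := hw
    have hden : 0 < w * a + (1 - w) * b := by
      rcases lt_or_ge w 1 with h | h
      · have h1 : 0 < (1 - w) * b := mul_pos (by linarith) hb
        nlinarith [mul_nonneg hw0 ha.le]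
      · have hw1' : w = 1 := le_antisymm hw1 h
        simp [hw1']; linarith
    have key : w * (1 - w) * (a - b) ^ 2
        ≤ (s - t) ^ 2 * (w * a + (1 - w) * b) := by
      rw [← hs, ← ht]
      nlinarith [mul_nonneg (sq_nonneg (s - t)) (sq_nonneg (w * s - (1 - w) * t))]
    exact ⟨key, (div_le_iff₀ hden).mpr key⟩
  · show t / (s + t) * (1 - t / (s + t)) * (a - b) ^ 2
        = (s - t) ^ 2 * (t / (s + t) * a + (1 - t / (s + t)) * b)
    rw [← hs, ← ht]
    field_simp
    ring
end

section
/- Let d ≥ 1 and let p₁, p₂ : Fin d → ℝ be probability vectors with all entries strictly positive (p_{ki} > 0 and Σ_i p_{ki} = 1 for k = 1,2). Then for every w ∈ [0,1], w(1 − w) · Σ_{i=1}^d (p_{1i} − p_{2i})² / (w p_{1i} + (1 − w) p_{2i}) ≤ Σ_{i=1}^d (√p_{1i} − √p_{2i})². -/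
/-- For two strictly positive discrete probability vectors `p₁, p₂` on `{1,…,d}`
and any mixture weight `w ∈ [0,1]`, the quantity `w(1 − w) g(w)`, where
`g(w) = Σ_i (p_{1i} − p_{2i})² / (w p_{1i} + (1 − w) p_{2i})` is the Fisher
information of the mixture, is bounded by the squared Hellinger distance
`Σ_i (√p_{1i} − √p_{2i})²`. -/
theorem stmt9 (d : ℕ) (hd : 1 ≤ d) (p₁ p₂ : Fin d → ℝ)
    (hp₁pos : ∀ i, 0 < p₁ i) (hp₂pos : ∀ i, 0 < p₂ i)
    (hp₁sum : ∑ i, p₁ i = 1) (hp₂sum : ∑ i, p₂ i = 1)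
    (w : ℝ) (hw : w ∈ Set.Icc (0 : ℝ) 1) :
    w * (1 - w) * ∑ i, (p₁ i - p₂ i) ^ 2 / (w * p₁ i + (1 - w) * p₂ i)
      ≤ ∑ i, (Real.sqrt (p₁ i) - Real.sqrt (p₂ i)) ^ 2 := by
  obtain ⟨hw0, hw1⟩ := hw
  rw [Finset.mul_sum]
  apply Finset.sum_le_sum
  intro i _
  set a := p₁ i with ha
  set b := p₂ i with hb
  have hapos := hp₁pos i
  have hbpos := hp₂pos i
  have hs : 0 < w * a + (1 - w) * b := by
    rcases lt_or_eq_of_le hw1 with h | h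
    · nlinarith [mul_nonneg hw0 hapos.le]
    · rw [h]; simpa using hapos
  have hsa : Real.sqrt a ^ 2 = a := Real.sq_sqrt hapos.le
  have hsb : Real.sqrt b ^ 2 = b := Real.sq_sqrt hbpos.le
  rw [show w * (1 - w) * ((a - b) ^ 2 / (w * a + (1 - w) * b)) = w * (1 - w) * (a - b) ^ 2 / (w * a + (1 - w) * b) by ring, div_le_iff₀ hs]
  have key : w * (1 - w) * (Real.sqrt a + Real.sqrt b) ^ 2 ≤ w * a + (1 - w) * b := by
    nlinarith [sq_nonneg (w * Real.sqrt a - (1 - w) * Real.sqrt b), Real.sqrt_nonneg a,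
      Real.sqrt_nonneg b, mul_nonneg (Real.sqrt_nonneg a) (Real.sqrt_nonneg b)]
  have hab : (a - b) ^ 2 = (Real.sqrt a - Real.sqrt b) ^ 2 * (Real.sqrt a + Real.sqrt b) ^ 2 := by
    nlinarith [Real.sqrt_nonneg a, Real.sqrt_nonneg b]
  calc w * (1 - w) * (a - b) ^ 2
      = (Real.sqrt a - Real.sqrt b) ^ 2 * (w * (1 - w) * (Real.sqrt a + Real.sqrt b) ^ 2) := by
        rw [hab]; ring
    _ ≤ (Real.sqrt a - Real.sqrt b) ^ 2 * (w * a + (1 - w) * b) :=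
        mul_le_mul_of_nonneg_left key (sq_nonneg _)
end

section
/- (Popoviciu's inequality on variances, finite discrete case.) Let d ≥ 1, let p : Fin d → ℝ be a probability vector (p_i ≥ 0, Σ_i p_i = 1), and let a : Fin d → ℝ. Then Σ_{i=1}^d a_i² p_i − (Σ_{i=1}^d a_i p_i)² ≤ (1/4) (max_i a_i − min_i a_i)². -/
/-- Popoviciu's inequality on variances, finite discrete case: for a probability
vector `p` on `{1,…,d}` and a function `a`, the variance
`Σ_i a_i² p_i − (Σ_i a_i p_i)²` is at most `(1/4)(max_i a_i − min_i a_i)²`. -/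
theorem stmt12 (d : ℕ) (hd : 1 ≤ d) (p a : Fin d → ℝ)
    (hpnonneg : ∀ i, 0 ≤ p i) (hpsum : ∑ i, p i = 1) :
    ∑ i, (a i) ^ 2 * p i - (∑ i, a i * p i) ^ 2
      ≤ (1 / 4) *
        (Finset.univ.sup' (Finset.univ_nonempty_iff.mpr (Fin.pos_iff_nonempty.mp hd)) a
          - Finset.univ.inf' (Finset.univ_nonempty_iff.mpr (Fin.pos_iff_nonempty.mp hd)) a) ^ 2 := by
  set M := Finset.univ.sup' (Finset.univ_nonempty_iff.mpr (Fin.pos_iff_nonempty.mp hd)) a with hM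
  set m := Finset.univ.inf' (Finset.univ_nonempty_iff.mpr (Fin.pos_iff_nonempty.mp hd)) a with hm
  have h1 : ∀ i, a i ≤ M := fun i => Finset.le_sup' a (Finset.mem_univ i)
  have h2 : ∀ i, m ≤ a i := fun i => Finset.inf'_le a (Finset.mem_univ i)
  have key : 0 ≤ ∑ i, p i * ((M - a i) * (a i - m)) :=
    Finset.sum_nonneg fun i _ => mul_nonneg (hpnonneg i)
      (mul_nonneg (by linarith [h1 i]) (by linarith [h2 i]))
  have expand : ∑ i, p i * ((M - a i) * (a i - m))
      = (M + m) * (∑ i, a i * p i) - (∑ i, a i ^ 2 * p i) - M * m * (∑ i, p i) := by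
    rw [Finset.mul_sum, Finset.mul_sum, ← Finset.sum_sub_distrib, ← Finset.sum_sub_distrib]
    exact Finset.sum_congr rfl fun i _ => by ring
  rw [hpsum] at expand
  nlinarith [key, expand, sq_nonneg (∑ i, a i * p i - (M + m) / 2)]
end

section
/- Let d ≥ 1 and a, b : Fin d → ℝ. Define Z(w) = Σ_{i=1}^d exp(a_i w + b_i) and p_i(w) = exp(a_i w + b_i)/Z(w). Then for every w ∈ [0,1], w(1 − w) · [Σ_{i=1}^d a_i² p_i(w) − (Σ_{i=1}^d a_i p_i(w))²] ≤ (1/16) (max_i a_i − min_i a_i)². -/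
/-- For the one-parameter exponential family with `p_i(w) = exp(a_i w + b_i)/Z(w)`,
`Z(w) = Σ_i exp(a_i w + b_i)`, and for every `w ∈ [0,1]`,
`w(1 − w)` times the Fisher information
`Σ_i a_i² p_i(w) − (Σ_i a_i p_i(w))²` is at most
`(1/16)(max_i a_i − min_i a_i)²`. -/
theorem stmt13 (d : ℕ) (hd : 1 ≤ d) (a b : Fin d → ℝ)
    (Z : ℝ → ℝ) (hZ : Z = fun w => ∑ i, Real.exp (a i * w + b i))
    (p : Fin d → ℝ → ℝ) (hp : p = fun i w => Real.exp (a i * w + b i) / Z w)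
    (w : ℝ) (hw : w ∈ Set.Icc (0 : ℝ) 1) :
    w * (1 - w) * (∑ i, (a i) ^ 2 * p i w - (∑ i, a i * p i w) ^ 2)
      ≤ (1 / 16) *
        (Finset.univ.sup' (Finset.univ_nonempty_iff.mpr (Fin.pos_iff_nonempty.mp hd)) a
          - Finset.univ.inf' (Finset.univ_nonempty_iff.mpr (Fin.pos_iff_nonempty.mp hd)) a) ^ 2 := by
  obtain ⟨hw0, hw1⟩ := hw
  have hne : (Finset.univ : Finset (Fin d)).Nonempty :=
    Finset.univ_nonempty_iff.mpr (Fin.pos_iff_nonempty.mp hd)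
  set M := Finset.univ.sup' hne a with hM
  set m := Finset.univ.inf' hne a with hm
  have hZpos : 0 < Z w := by
    rw [hZ]
    exact Finset.sum_pos (fun i _ => Real.exp_pos _) hne
  have hppos : ∀ i, 0 < p i w := by
    intro i
    rw [hp]
    exact div_pos (Real.exp_pos _) hZpos
  have hpsum : ∑ i, p i w = 1 := by
    rw [hp]
    simp only
    rw [← Finset.sum_div]
    have : Z w = ∑ i, Real.exp (a i * w + b i) := by rw [hZ]
    rw [← this]
    exact div_self (ne_of_gt hZpos)
  have hle : ∀ i, m ≤ a i ∧ a i ≤ M := fun i =>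
    ⟨Finset.inf'_le _ (Finset.mem_univ i), Finset.le_sup' _ (Finset.mem_univ i)⟩
  set μ := ∑ i, a i * p i w with hμ
  -- nonnegativity of S := Σ (M - a i)(a i - m) p i
  have hS : 0 ≤ ∑ i, (M - a i) * (a i - m) * p i w := by
    apply Finset.sum_nonneg
    intro i _
    have h := hle i
    exact mul_nonneg (mul_nonneg (by linarith [h.2]) (by linarith [h.1])) (hppos i).le
  have hSval : ∑ i, (M - a i) * (a i - m) * p i w
      = (M + m) * μ - M * m - ∑ i, (a i) ^ 2 * p i w := by
    have : ∀ i, (M - a i) * (a i - m) * p i w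
        = (M + m) * (a i * p i w) - M * m * p i w - (a i) ^ 2 * p i w := by
      intro i; ring
    rw [Finset.sum_congr rfl (fun i _ => this i)]
    rw [Finset.sum_sub_distrib, Finset.sum_sub_distrib, ← Finset.mul_sum,
      ← Finset.mul_sum, hpsum, mul_one]
  -- variance nonneg: Σ (a i - μ)^2 p i = Σ a² p - μ²
  have hVar : 0 ≤ ∑ i, (a i) ^ 2 * p i w - μ ^ 2 := by
    have key : ∑ i, (a i - μ) ^ 2 * p i w = ∑ i, (a i) ^ 2 * p i w - μ ^ 2 := by
      have : ∀ i, (a i - μ) ^ 2 * p i w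
          = (a i) ^ 2 * p i w - 2 * μ * (a i * p i w) + μ ^ 2 * p i w := by
        intro i; ring
      rw [Finset.sum_congr rfl (fun i _ => this i)]
      rw [Finset.sum_add_distrib, Finset.sum_sub_distrib, ← Finset.mul_sum,
        ← Finset.mul_sum, hpsum, ← hμ]
      ring
    rw [← key]
    exact Finset.sum_nonneg fun i _ => mul_nonneg (sq_nonneg _) (hppos i).le
  -- Popoviciu: Var ≤ (M - μ)(μ - m) ≤ ((M - m)/2)²
  have hPop : ∑ i, (a i) ^ 2 * p i w - μ ^ 2 ≤ (1 / 4) * (M - m) ^ 2 := by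
    have h1 : ∑ i, (a i) ^ 2 * p i w - μ ^ 2 ≤ (M - μ) * (μ - m) := by
      rw [hSval] at hS; nlinarith
    nlinarith [sq_nonneg (M + m - 2 * μ)]
  have hw14 : w * (1 - w) ≤ 1 / 4 := by nlinarith [sq_nonneg (w - 1/2)]
  have hw0' : 0 ≤ w * (1 - w) := by nlinarith
  calc w * (1 - w) * (∑ i, (a i) ^ 2 * p i w - μ ^ 2)
      ≤ (1 / 4) * ((1 / 4) * (M - m) ^ 2) :=
        mul_le_mul hw14 hPop hVar (by norm_num)
    _ = (1 / 16) * (M - m) ^ 2 := by ring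
end
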